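/- arXiv:2407.14718 — 3 statements merged into one kernel-verified Lean document; each statement's English description precedes it below -/
import Mathlib

section
/- Let N₀, N₁ be natural numbers, H₀ a symmetric N₀×N₀ real matrix, H₁ a symmetric N₁×N₁ real matrix, G an N₁×N₀ real matrix, and b, k, c ∈ ℝ. Let p : ℝ → ℝ^{N₀} and v : ℝ → ℝ^{N₁} be differentiable, define ρ(t) = H₀ p(t) − k c (p(t) ⊙ p(t)) where ⊙ is the componentwise product, and suppose the semi-discrete Westervelt equations hold: ρ′(t) = −b Gᵀ H₁ G p(t) + Gᵀ H₁ v(t) and v′(t) = −G p(t) for all t. Define the discrete Hamiltonian 𝖧(t) = (1/2)(p(t)ᵀ H₀ p(t) + v(t)ᵀ H₁ v(t)) − (2kc/3) Σᵢ pᵢ(t)³. Then 𝖧 is differentiable and 𝖧′(t) = −b p(t)ᵀ Gᵀ H₁ G p(t) for all t. -/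
open Matrix

lemma symm_dot_aux {n:ℕ} (H : Matrix (Fin n) (Fin n) ℝ) (hH : H.IsSymm) (f g : Fin n → ℝ) :
    f ⬝ᵥ H.mulVec g = g ⬝ᵥ H.mulVec f := by
  rw [Matrix.dotProduct_mulVec, ← Matrix.mulVec_transpose, hH.eq, dotProduct_comm]

lemma quad_deriv_aux {n:ℕ} (H : Matrix (Fin n) (Fin n) ℝ) (f : ℝ → Fin n → ℝ) (f' : Fin n → ℝ) (t : ℝ)
    (hf : ∀ i, HasDerivAt (fun s => f s i) (f' i) t) :
    HasDerivAt (fun s => f s ⬝ᵥ H.mulVec (f s))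
      (f' ⬝ᵥ H.mulVec (f t) + f t ⬝ᵥ H.mulVec f') t := by
  simp only [dotProduct, Matrix.mulVec, ← Finset.sum_add_distrib]
  exact HasDerivAt.fun_sum fun i _ =>
    ((hf i).mul (HasDerivAt.fun_sum fun j _ => (hf j).const_mul (H i j)))

/-- For the semi-discrete Westervelt system with symmetric duality
matrices `H₀, H₁`, discrete gradient `G`, dissipation parameter `b`, nonlinearity `k`,
quadrature weight `c`, constitutive relation `ρ = H₀ p − k c (p ⊙ p)` and evolution
`ρ′ = −b Gᵀ H₁ G p + Gᵀ H₁ v`, `v′ = −G p`, the discrete Hamiltonian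
`𝖧 = ½(pᵀH₀p + vᵀH₁v) − (2kc/3) Σᵢ pᵢ³` dissipates at the rate
`𝖧′(t) = −b p(t)ᵀ Gᵀ H₁ G p(t)`. -/
theorem discrete_energy_dissipation_rate
    (N₀ N₁ : ℕ)
    (H₀ : Matrix (Fin N₀) (Fin N₀) ℝ) (H₁ : Matrix (Fin N₁) (Fin N₁) ℝ)
    (hH₀ : H₀.IsSymm) (hH₁ : H₁.IsSymm)
    (G : Matrix (Fin N₁) (Fin N₀) ℝ) (b k c : ℝ)
    (p : ℝ → Fin N₀ → ℝ) (v : ℝ → Fin N₁ → ℝ)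
    (hp : Differentiable ℝ p) (hv : Differentiable ℝ v)
    (ρ : ℝ → Fin N₀ → ℝ)
    (hρ : ∀ t : ℝ, ρ t = H₀.mulVec (p t) - (k * c) • (p t * p t))
    (hρ' : ∀ t : ℝ, HasDerivAt ρ
      (-(b • (G.transpose * H₁ * G).mulVec (p t)) + (G.transpose * H₁).mulVec (v t)) t)
    (hv' : ∀ t : ℝ, HasDerivAt v (-(G.mulVec (p t))) t) :
    ∀ t : ℝ, HasDerivAt
      (fun s : ℝ => (1 / 2) * (p s ⬝ᵥ H₀.mulVec (p s) + v s ⬝ᵥ H₁.mulVec (v s))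
          - (2 * k * c / 3) * ∑ i : Fin N₀, (p s i) ^ 3)
      (-(b * (p t ⬝ᵥ (G.transpose * H₁ * G).mulVec (p t)))) t := by
  intro t
  set q : Fin N₀ → ℝ := deriv p t with hq
  have hp' : HasDerivAt p q t := (hp t).hasDerivAt
  have hpi : ∀ i, HasDerivAt (fun s => p s i) (q i) t := fun i => hasDerivAt_pi.1 hp' i
  have hvi : ∀ i, HasDerivAt (fun s => v s i) (-(G.mulVec (p t)) i) t :=
    fun i => hasDerivAt_pi.1 (hv' t) i
  -- derivative of ρ computed from the constitutive relation
  have hρd : HasDerivAt ρ (H₀.mulVec q - (k * c) • (q * p t + p t * q)) t := by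
    have : HasDerivAt (fun s => H₀.mulVec (p s) - (k * c) • (p s * p s))
        (H₀.mulVec q - (k * c) • (q * p t + p t * q)) t := by
      rw [hasDerivAt_pi]
      intro i
      simp only [Pi.sub_apply, Pi.smul_apply, Pi.mul_apply, Pi.add_apply, smul_eq_mul,
        Matrix.mulVec, dotProduct]
      exact ((HasDerivAt.fun_sum fun j _ => (hpi j).const_mul (H₀ i j)).sub
        (((hpi i).mul (hpi i)).const_mul (k * c)))
    exact this.congr_deriv rfl |>.congr_of_eventuallyEq (by filter_upwards with s; rw [hρ s]) |>.congr_deriv rfl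
  have key : H₀.mulVec q - (k * c) • (q * p t + p t * q)
      = -(b • (G.transpose * H₁ * G).mulVec (p t)) + (G.transpose * H₁).mulVec (v t) :=
    hρd.unique (hρ' t)
  -- derivative of the Hamiltonian
  have hPq := quad_deriv_aux H₀ p q t hpi
  have hVq := quad_deriv_aux H₁ v (-(G.mulVec (p t))) t hvi
  have hcube : HasDerivAt (fun s => ∑ i : Fin N₀, (p s i) ^ 3)
      (∑ i : Fin N₀, 3 * (p t i) ^ 2 * q i) t := by
    refine HasDerivAt.fun_sum fun i _ => ?_
    have := (hpi i).fun_pow 3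
    simpa using this
  have hH : HasDerivAt
      (fun s : ℝ => (1 / 2) * (p s ⬝ᵥ H₀.mulVec (p s) + v s ⬝ᵥ H₁.mulVec (v s))
          - (2 * k * c / 3) * ∑ i : Fin N₀, (p s i) ^ 3)
      ((1 / 2) * ((q ⬝ᵥ H₀.mulVec (p t) + p t ⬝ᵥ H₀.mulVec q)
        + ((-(G.mulVec (p t))) ⬝ᵥ H₁.mulVec (v t) + v t ⬝ᵥ H₁.mulVec (-(G.mulVec (p t)))))
        - (2 * k * c / 3) * ∑ i : Fin N₀, 3 * (p t i) ^ 2 * q i) t :=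
    ((hPq.add hVq).const_mul _).sub (hcube.const_mul _)
  convert hH using 1
  -- now the algebraic identity
  have e1 : q ⬝ᵥ H₀.mulVec (p t) = p t ⬝ᵥ H₀.mulVec q := symm_dot_aux H₀ hH₀ q (p t)
  have e2 : (-(G.mulVec (p t))) ⬝ᵥ H₁.mulVec (v t) = v t ⬝ᵥ H₁.mulVec (-(G.mulVec (p t))) :=
    symm_dot_aux H₁ hH₁ _ _
  have keyd : p t ⬝ᵥ (H₀.mulVec q - (k * c) • (q * p t + p t * q))
      = p t ⬝ᵥ (-(b • (G.transpose * H₁ * G).mulVec (p t)) + (G.transpose * H₁).mulVec (v t)) := by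
    rw [key]
  have e3 : p t ⬝ᵥ (G.transpose * H₁).mulVec (v t) = v t ⬝ᵥ H₁.mulVec (G.mulVec (p t)) := by
    rw [Matrix.dotProduct_mulVec, ← Matrix.mulVec_transpose, Matrix.transpose_mul,
      Matrix.transpose_transpose, hH₁.eq, ← Matrix.mulVec_mulVec, dotProduct_comm]
  have e4 : p t ⬝ᵥ (q * p t + p t * q) = 2 * ∑ i, (p t i) ^ 2 * q i := by
    simp only [dotProduct, Pi.add_apply, Pi.mul_apply, Finset.mul_sum]
    apply Finset.sum_congr rfl
    intro i _
    ring
  have e5 : p t ⬝ᵥ (H₀.mulVec q - (k * c) • (q * p t + p t * q))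
      = p t ⬝ᵥ H₀.mulVec q - (k * c) * (2 * ∑ i, (p t i) ^ 2 * q i) := by
    rw [dotProduct_sub, dotProduct_smul, e4, smul_eq_mul]
  have e6 : p t ⬝ᵥ (-(b • (G.transpose * H₁ * G).mulVec (p t)) + (G.transpose * H₁).mulVec (v t))
      = -(b * (p t ⬝ᵥ (G.transpose * H₁ * G).mulVec (p t))) + v t ⬝ᵥ H₁.mulVec (G.mulVec (p t)) := by
    rw [dotProduct_add, dotProduct_neg, dotProduct_smul, e3, smul_eq_mul]
  have e7 : v t ⬝ᵥ H₁.mulVec (-(G.mulVec (p t))) = -(v t ⬝ᵥ H₁.mulVec (G.mulVec (p t))) := by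
    rw [Matrix.mulVec_neg, dotProduct_neg]
  rw [e5, e6] at keyd
  rw [e1, ← e2, symm_dot_aux H₁ hH₁, e7]
  have e8 : ∑ i : Fin N₀, 3 * (p t i) ^ 2 * q i = 3 * ∑ i, (p t i) ^ 2 * q i := by
    rw [Finset.mul_sum]; apply Finset.sum_congr rfl; intro i _; ring
  rw [e8]
  linarith [keyd]
end

section
/- Let N₀, N₁ be natural numbers, H₀ a symmetric N₀×N₀ real matrix, H₁ a symmetric N₁×N₁ real matrix, G an N₁×N₀ real matrix, and k, c ∈ ℝ. Let p : ℝ → ℝ^{N₀} and v : ℝ → ℝ^{N₁} be differentiable, define ρ(t) = H₀ p(t) − k c (p(t) ⊙ p(t)) where ⊙ is the componentwise product, and suppose the dissipation-free semi-discrete Westervelt equations hold: ρ′(t) = Gᵀ H₁ v(t) and v′(t) = −G p(t) for all t. Then the discrete Hamiltonian 𝖧(t) = (1/2)(p(t)ᵀ H₀ p(t) + v(t)ᵀ H₁ v(t)) − (2kc/3) Σᵢ pᵢ(t)³ is exactly conserved: 𝖧(t) = 𝖧(0) for all t ∈ ℝ. -/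
open Matrix

lemma symm_bilin_aux {n : ℕ} (M : Matrix (Fin n) (Fin n) ℝ) (hM : M.IsSymm)
    (x y : Fin n → ℝ) :
    ∑ i, x i * ∑ j, M i j * y j = ∑ i, y i * ∑ j, M i j * x j := by
  simp_rw [Finset.mul_sum]
  rw [Finset.sum_comm]
  exact Finset.sum_congr rfl fun i _ => Finset.sum_congr rfl fun j _ => by
    rw [hM.apply j i]; ring

/-- For the dissipation-free semi-discrete Westervelt system with
symmetric duality matrices `H₀, H₁`, discrete gradient `G`, constitutive relation
`ρ = H₀ p − k c (p ⊙ p)` and evolution `ρ′ = Gᵀ H₁ v`, `v′ = −G p`, the discrete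
Hamiltonian `𝖧 = ½(pᵀH₀p + vᵀH₁v) − (2kc/3) Σᵢ pᵢ³` is exactly conserved. -/
theorem discrete_energy_conservation
    (N₀ N₁ : ℕ)
    (H₀ : Matrix (Fin N₀) (Fin N₀) ℝ) (H₁ : Matrix (Fin N₁) (Fin N₁) ℝ)
    (hH₀ : H₀.IsSymm) (hH₁ : H₁.IsSymm)
    (G : Matrix (Fin N₁) (Fin N₀) ℝ) (k c : ℝ)
    (p : ℝ → Fin N₀ → ℝ) (v : ℝ → Fin N₁ → ℝ)
    (hp : Differentiable ℝ p) (hv : Differentiable ℝ v)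
    (ρ : ℝ → Fin N₀ → ℝ)
    (hρ : ∀ t : ℝ, ρ t = H₀.mulVec (p t) - (k * c) • (p t * p t))
    (hρ' : ∀ t : ℝ, HasDerivAt ρ ((G.transpose * H₁).mulVec (v t)) t)
    (hv' : ∀ t : ℝ, HasDerivAt v (-(G.mulVec (p t))) t) :
    ∀ t : ℝ,
      (1 / 2) * (p t ⬝ᵥ H₀.mulVec (p t) + v t ⬝ᵥ H₁.mulVec (v t))
          - (2 * k * c / 3) * ∑ i : Fin N₀, (p t i) ^ 3
        = (1 / 2) * (p 0 ⬝ᵥ H₀.mulVec (p 0) + v 0 ⬝ᵥ H₁.mulVec (v 0))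
          - (2 * k * c / 3) * ∑ i : Fin N₀, (p 0 i) ^ 3 := by
  -- derivative of p
  set p' : ℝ → Fin N₀ → ℝ := fun s => deriv p s with hp'def
  have hp' : ∀ s, HasDerivAt p (p' s) s := fun s => (hp s).hasDerivAt
  have hpi : ∀ s i, HasDerivAt (fun u => p u i) (p' s i) s :=
    fun s i => hasDerivAt_pi.mp (hp' s) i
  have hvi : ∀ s i, HasDerivAt (fun u => v u i) (-(G.mulVec (p s)) i) s :=
    fun s i => hasDerivAt_pi.mp (hv' s) i
  -- key relation from uniqueness of derivatives of ρ
  have key : ∀ s i,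
      (∑ j, H₀ i j * p' s j) - k * c * (p' s i * p s i + p s i * p' s i)
        = ((G.transpose * H₁).mulVec (v s)) i := by
    intro s i
    have h1 : HasDerivAt (fun u => ρ u i) (((G.transpose * H₁).mulVec (v s)) i) s :=
      hasDerivAt_pi.mp (hρ' s) i
    have h2 : HasDerivAt (fun u => ρ u i)
        ((∑ j, H₀ i j * p' s j) - k * c * (p' s i * p s i + p s i * p' s i)) s := by
      have heq : (fun u => ρ u i)
          = fun u => (∑ j, H₀ i j * p u j) - k * c * (p u i * p u i) := by
        funext u
        rw [hρ u]
        simp [mulVec, dotProduct]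
      rw [heq]
      exact (HasDerivAt.fun_sum fun j _ => (hpi s j).const_mul (H₀ i j)).sub
        (((hpi s i).mul (hpi s i)).const_mul (k * c))
    exact h2.unique h1
  -- the energy in sum form
  set E : ℝ → ℝ := fun u =>
    (1 / 2) * ((∑ i, p u i * ∑ j, H₀ i j * p u j) + ∑ i, v u i * ∑ j, H₁ i j * v u j)
      - (2 * k * c / 3) * ∑ i, (p u i) ^ 3 with hEdef
  have hEderiv : ∀ s, HasDerivAt E 0 s := by
    intro s
    set v' : Fin N₁ → ℝ := -(G.mulVec (p s)) with hv'def
    have hD : HasDerivAt E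
        ((1 / 2) * ((∑ i, (p' s i * ∑ j, H₀ i j * p s j
              + p s i * ∑ j, H₀ i j * p' s j))
            + ∑ i, (v' i * ∑ j, H₁ i j * v s j + v s i * ∑ j, H₁ i j * v' j))
          - (2 * k * c / 3) * ∑ i, ((3 : ℕ) * p s i ^ 2 * p' s i)) s := by
      refine HasDerivAt.sub (HasDerivAt.const_mul _ (HasDerivAt.add ?_ ?_))
        (HasDerivAt.const_mul _ (HasDerivAt.fun_sum fun i _ => ?_))
      · exact HasDerivAt.fun_sum fun i _ =>
          (hpi s i).mul (HasDerivAt.fun_sum fun j _ => (hpi s j).const_mul (H₀ i j))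
      · exact HasDerivAt.fun_sum fun i _ =>
          (hvi s i).mul (HasDerivAt.fun_sum fun j _ => (hvi s j).const_mul (H₁ i j))
      · exact (hpi s i).pow 3
    have hzero :
        ((1 / 2) * ((∑ i, (p' s i * ∑ j, H₀ i j * p s j
              + p s i * ∑ j, H₀ i j * p' s j))
            + ∑ i, (v' i * ∑ j, H₁ i j * v s j + v s i * ∑ j, H₁ i j * v' j))
          - (2 * k * c / 3) * ∑ i, ((3 : ℕ) * p s i ^ 2 * p' s i)) = 0 := by
      have symm0 := symm_bilin_aux H₀ hH₀ (p' s) (p s)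
      have symm1 := symm_bilin_aux H₁ hH₁ v' (v s)
      -- from key, summed against p s
      have hkey : ∑ i, p s i * ∑ j, H₀ i j * p' s j
          - 2 * (k * c) * ∑ i, p s i ^ 2 * p' s i
          = p s ⬝ᵥ (G.transpose * H₁).mulVec (v s) := by
        have := Finset.sum_congr rfl (fun i (_ : i ∈ Finset.univ) =>
          congrArg (fun x => p s i * x) (key s i))
        calc ∑ i, p s i * ∑ j, H₀ i j * p' s j
              - 2 * (k * c) * ∑ i, p s i ^ 2 * p' s i
            = ∑ i, p s i * ((∑ j, H₀ i j * p' s j)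
                - k * c * (p' s i * p s i + p s i * p' s i)) := by
              rw [Finset.mul_sum, ← Finset.sum_sub_distrib]
              exact Finset.sum_congr rfl fun i _ => by ring
          _ = ∑ i, p s i * ((G.transpose * H₁).mulVec (v s)) i := this
          _ = p s ⬝ᵥ (G.transpose * H₁).mulVec (v s) := rfl
      -- cross identity
      have hcross : p s ⬝ᵥ (G.transpose * H₁).mulVec (v s)
          = ∑ i, v s i * ∑ j, H₁ i j * (G.mulVec (p s)) j := by
        rw [Matrix.dotProduct_mulVec]
        have hT : (H₁ * G)ᵀ = G.transpose * H₁ := by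
          rw [Matrix.transpose_mul, hH₁.eq]
        rw [← hT, Matrix.vecMul_transpose, ← Matrix.mulVec_mulVec,
          dotProduct_comm]
        simp [dotProduct, mulVec]
      -- v' = -G p
      have hv'sum : ∑ i, v s i * ∑ j, H₁ i j * v' j
          = - ∑ i, v s i * ∑ j, H₁ i j * (G.mulVec (p s)) j := by
        rw [← Finset.sum_neg_distrib]
        refine Finset.sum_congr rfl fun i _ => ?_
        have : ∑ j, H₁ i j * v' j = -∑ j, H₁ i j * (G.mulVec (p s)) j := by
          rw [← Finset.sum_neg_distrib]
          exact Finset.sum_congr rfl fun j _ => by rw [hv'def]; simp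
        rw [this]; ring
      rw [Finset.sum_add_distrib, Finset.sum_add_distrib, symm0, symm1, hv'sum]
      have h3 : ∑ i, ((3 : ℕ) * p s i ^ 2 * p' s i) = 3 * ∑ i, p s i ^ 2 * p' s i := by
        rw [Finset.mul_sum]; exact Finset.sum_congr rfl fun i _ => by push_cast; ring
      rw [h3]
      nlinarith [hkey, hcross]
    rw [hzero] at hD
    exact hD
  have hEdiff : Differentiable ℝ E := fun s => (hEderiv s).differentiableAt
  have hconst : ∀ t, E t = E 0 := fun t =>
    is_const_of_deriv_eq_zero hEdiff (fun s => (hEderiv s).deriv) t 0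
  intro t
  have := hconst t
  simpa only [hEdef, dotProduct, mulVec] using this
end

section
/- Let N₀, N₁, M be natural numbers, G an N₁×N₀ real matrix and C an M×N₁ real matrix with C · G = 0, and fix a ∈ ℝ^M. Define the observable 𝖢 : ℝ^{N₀} × ℝ^{N₁} → ℝ by 𝖢(ρ, v) = aᵀ (C v). Then for every function F : ℝ^{N₀} × ℝ^{N₁} → ℝ that is differentiable at (ρ, v), the discrete acoustic Poisson bracket of F and 𝖢 vanishes: {F, 𝖢}(ρ, v) = (∇_v F)ᵀ G (∇_ρ 𝖢) − (∇_v 𝖢)ᵀ G (∇_ρ F) = 0, where ∇_ρ and ∇_v denote the partial gradients with respect to the first and second arguments. That is, every component functional of the discrete vorticity C v is a Casimir invariant of the discrete acoustic Poisson bracket. -/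
/-!
The observable `(ρ, v) ↦ a ⬝ᵥ C v` is linear and independent of `ρ`, so its `ρ`-gradient vanishes
and its `v`-gradient is the constant covector `aᵀ C`. The first term of the bracket is therefore
zero, and the second is `aᵀ C G ∇_ρ F`, which vanishes because `C G = 0`.
-/

open Matrix

theorem Matrix.dotProduct_vecMul_mulVec_eq_zero {m n o R : Type*} [Fintype m] [Fintype n]
    [Fintype o] [CommSemiring R] {C : Matrix m n R} {G : Matrix n o R} (hCG : C * G = 0)
    (a : m → R) (g : o → R) : (a ᵥ* C) ⬝ᵥ (G *ᵥ g) = 0 := by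
  rw [dotProduct_mulVec, vecMul_vecMul, hCG, vecMul_zero, zero_dotProduct]

theorem fderiv_dotProduct_mulVec_snd_apply {E m n : Type*} [NormedAddCommGroup E]
    [NormedSpace ℝ E] [Fintype m] [Fintype n] (a : m → ℝ) (C : Matrix m n ℝ)
    (p h : E × (n → ℝ)) :
    fderiv ℝ (fun x : E × (n → ℝ) => a ⬝ᵥ C *ᵥ x.2) p h = a ⬝ᵥ C *ᵥ h.2 := by
  let ℓ : (n → ℝ) →L[ℝ] ℝ :=
    LinearMap.toContinuousLinearMap (dotProductBilin ℝ ℝ a ∘ₗ C.mulVecLin)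
  exact congr($((ℓ.comp (.snd ℝ E _)).fderiv) h)

theorem discrete_vorticity_casimir_general
    (N₀ N₁ M : ℕ) (G : Matrix (Fin N₁) (Fin N₀) ℝ) (C : Matrix (Fin M) (Fin N₁) ℝ)
    (hCG : C * G = 0) (a : Fin M → ℝ)
    (ρ : Fin N₀ → ℝ) (v : Fin N₁ → ℝ)
    (F : (Fin N₀ → ℝ) × (Fin N₁ → ℝ) → ℝ) :
    (fun j : Fin N₁ => fderiv ℝ F (ρ, v) (0, Pi.single j 1)) ⬝ᵥ
        G.mulVec (fun i : Fin N₀ =>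
          fderiv ℝ (fun x : (Fin N₀ → ℝ) × (Fin N₁ → ℝ) => a ⬝ᵥ C.mulVec x.2)
            (ρ, v) (Pi.single i 1, 0))
      - (fun j : Fin N₁ =>
          fderiv ℝ (fun x : (Fin N₀ → ℝ) × (Fin N₁ → ℝ) => a ⬝ᵥ C.mulVec x.2)
            (ρ, v) (0, Pi.single j 1)) ⬝ᵥ
        G.mulVec (fun i : Fin N₀ => fderiv ℝ F (ρ, v) (Pi.single i 1, 0))
      = 0 := by
  simp only [fderiv_dotProduct_mulVec_snd_apply]
  have grad_ρ : (fun _ : Fin N₀ => a ⬝ᵥ C *ᵥ (0 : Fin N₁ → ℝ)) = 0 := by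
    simp only [mulVec_zero, dotProduct_zero]; rfl
  have grad_v : (fun j : Fin N₁ => a ⬝ᵥ C *ᵥ Pi.single j 1) = a ᵥ* C :=
    funext fun j => by rw [dotProduct_mulVec, dotProduct_single_one]
  rw [grad_ρ, grad_v, mulVec_zero, dotProduct_zero, zero_sub, neg_eq_zero]
  exact dotProduct_vecMul_mulVec_eq_zero hCG a _

/-- With `C G = 0`, the observable `𝖢(ρ, v) = aᵀ (C v)` is a Casimir of
the discrete acoustic Poisson bracket: for every `F` differentiable at `(ρ, v)`,
`{F, 𝖢}(ρ, v) = (∇_v F)ᵀ G (∇_ρ 𝖢) − (∇_v 𝖢)ᵀ G (∇_ρ F) = 0`. -/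
theorem discrete_vorticity_casimir
    (N₀ N₁ M : ℕ) (G : Matrix (Fin N₁) (Fin N₀) ℝ) (C : Matrix (Fin M) (Fin N₁) ℝ)
    (hCG : C * G = 0) (a : Fin M → ℝ)
    (ρ : Fin N₀ → ℝ) (v : Fin N₁ → ℝ)
    (F : (Fin N₀ → ℝ) × (Fin N₁ → ℝ) → ℝ)
    (hF : DifferentiableAt ℝ F (ρ, v)) :
    (fun j : Fin N₁ => fderiv ℝ F (ρ, v) (0, Pi.single j 1)) ⬝ᵥ
        G.mulVec (fun i : Fin N₀ =>
          fderiv ℝ (fun x : (Fin N₀ → ℝ) × (Fin N₁ → ℝ) => a ⬝ᵥ C.mulVec x.2)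
            (ρ, v) (Pi.single i 1, 0))
      - (fun j : Fin N₁ =>
          fderiv ℝ (fun x : (Fin N₀ → ℝ) × (Fin N₁ → ℝ) => a ⬝ᵥ C.mulVec x.2)
            (ρ, v) (0, Pi.single j 1)) ⬝ᵥ
        G.mulVec (fun i : Fin N₀ => fderiv ℝ F (ρ, v) (Pi.single i 1, 0))
      = 0 :=
  discrete_vorticity_casimir_general N₀ N₁ M G C hCG a ρ v F
end
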